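/- For each object (d,m) of 𝒱_r, the set of all morphisms of 𝒱_r with source (d,m), preordered by divisibility (α ≤ α′ iff α′ = β ∘ α for some morphism β), is noetherian (well-quasi-ordered): for every infinite sequence α₁, α₂, … of morphisms with source (d,m) there exist indices i < j with α_i ≤ α_j. -/

import Mathlib

open scoped Classical

/-- A morphism `(d,m) → (e,n)` in the Veronese category `𝒱_r`.  Here `M(e)` is realized as
the set of functions `Fin r → ℕ` with coordinate sum `e`. -/
structure VMor (r d m e n : ℕ) where
  hde : d ≤ e
  α₁ : Fin m → Fin n
  mono : StrictMono α₁
  α₂ : ∀ i : Fin n, i ∉ Set.range α₁ → Fin r → ℕ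
  hα₂ : ∀ i hi, ∑ t, α₂ i hi t = e
  α₃ : Fin m → Fin r → ℕ
  hα₃ : ∀ i, ∑ t, α₃ i t = e - d

namespace VMor

variable {r d m e n f p : ℕ}

/-- Composition in the Veronese category. -/
noncomputable def comp (β : VMor r e n f p) (α : VMor r d m e n) : VMor r d m f p where
  hde := α.hde.trans β.hde
  α₁ := β.α₁ ∘ α.α₁
  mono := β.mono.comp α.mono
  α₂ := fun i hi =>
    if h : ∃ i', β.α₁ i' = i then
      α.α₂ h.choose
          (fun hc => hi ⟨hc.choose, by
            rw [Function.comp_apply, hc.choose_spec, h.choose_spec]⟩)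
        + β.α₃ h.choose
    else β.α₂ i fun hmem => h hmem
  hα₂ := fun i hi => by
    try dsimp only
    split
    · rename_i h
      simp only [Pi.add_apply]
      rw [Finset.sum_add_distrib, α.hα₂, β.hα₃]
      have h1 := α.hde
      have h2 := β.hde
      omega
    · exact β.hα₂ _ _
  α₃ := fun i => α.α₃ i + β.α₃ (α.α₁ i)
  hα₃ := fun i => by
    simp only [Pi.add_apply]
    rw [Finset.sum_add_distrib, α.hα₃, β.hα₃]
    have h1 := α.hde
    have h2 := β.hde
    omega

/-- The identity morphism `(d,m) → (d,m)`, given by the identity injection and zero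
vectors for `α₃`. -/
def id (r d m : ℕ) : VMor r d m d m where
  hde := le_refl d
  α₁ := _root_.id
  mono := strictMono_id
  α₂ := fun i hi => absurd ⟨i, rfl⟩ hi
  hα₂ := fun i hi => absurd ⟨i, rfl⟩ hi
  α₃ := fun _ _ => 0
  hα₃ := fun _ => by simp

end VMor

section Aux

/-- The relation on labels: equal marker component, dominated vector component. -/
def VRel (m r : ℕ) (a b : Option (Fin m) × (Fin r → ℕ)) : Prop :=
  a.1 = b.1 ∧ a.2 ≤ b.2

instance (m r : ℕ) : IsRefl (Option (Fin m) × (Fin r → ℕ)) (VRel m r) :=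
  ⟨fun _ => ⟨rfl, le_refl _⟩⟩

instance (m r : ℕ) : IsTrans (Option (Fin m) × (Fin r → ℕ)) (VRel m r) :=
  ⟨fun _ _ _ h1 h2 => ⟨h1.1.trans h2.1, h1.2.trans h2.2⟩⟩

theorem VRel_pwo (m r : ℕ) :
    (Set.univ : Set (Option (Fin m) × (Fin r → ℕ))).PartiallyWellOrderedOn (VRel m r) := by
  haveI : IsRefl (Option (Fin m)) (Eq) := ⟨fun _ => rfl⟩
  have h1 : (Set.univ : Set (Option (Fin m))).PartiallyWellOrderedOn (Eq) :=
    Set.finite_univ.partiallyWellOrderedOn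
  have h2 : (Set.univ : Set (Fin r → ℕ)).IsPWO :=
    Set.isPWO_of_wellQuasiOrderedLE Set.univ
  have := h1.prod h2
  rw [Set.partiallyWellOrderedOn_iff_exists_lt] at this ⊢
  refine fun f hf => ?_
  obtain ⟨a, b, hab, h⟩ := this f (fun i => ⟨Set.mem_univ _, Set.mem_univ _⟩)
  exact ⟨a, b, hab, h⟩

theorem exists_embedding_of_sublistForall₂ {A : Type*} {S : A → A → Prop} {n p : ℕ}
    (u : Fin n → A) (v : Fin p → A)
    (h : List.SublistForall₂ S ((List.finRange n).map u) ((List.finRange p).map v)) :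
    ∃ g : Fin n → Fin p, StrictMono g ∧ ∀ i, S (u i) (v (g i)) := by
  obtain ⟨l, hforall, hsub⟩ := List.sublistForall₂_iff.1 h
  obtain ⟨f0, hf0⟩ := List.sublist_iff_exists_fin_orderEmbedding_get_eq.1 hsub
  have hlen1 : ((List.finRange n).map u).length = n := by simp
  have hlen2 : l.length = n := by
    have := hforall.length_eq; omega
  have hlenp : ((List.finRange p).map v).length = p := by simp
  refine ⟨fun i => Fin.cast hlenp (f0 (Fin.cast hlen2.symm i)), ?_, ?_⟩
  · intro i j hij
    exact f0.strictMono hij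
  · intro i
    have hforall' := List.forall₂_iff_get.1 hforall
    have h1 : (i : ℕ) < ((List.finRange n).map u).length := by omega
    have h2 : (i : ℕ) < l.length := by omega
    have hS := hforall'.2 i h1 h2
    have hget1 : ((List.finRange n).map u).get ⟨i, h1⟩ = u i := by
      simp
    have hget2 : l.get ⟨i, h2⟩ =
        ((List.finRange p).map v).get (f0 ⟨i, h2⟩) := hf0 _
    have hget3 : ((List.finRange p).map v).get (f0 ⟨i, h2⟩) =
        v (Fin.cast hlenp (f0 ⟨i, h2⟩)) := by
      simp only [List.get_eq_getElem, List.getElem_map, List.getElem_finRange]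
      rfl
    rw [hget1, hget2, hget3] at hS
    exact hS

end Aux

namespace VMor

variable {r d m e n f p : ℕ}

theorem ext' {a b : VMor r d m e n} (h1 : a.α₁ = b.α₁)
    (h2 : ∀ i (hia : i ∉ Set.range a.α₁) (hib : i ∉ Set.range b.α₁), a.α₂ i hia = b.α₂ i hib)
    (h3 : a.α₃ = b.α₃) : a = b := by
  obtain ⟨p1, a1, p2, a2, p3, a3, p4⟩ := a
  obtain ⟨q1, b1, q2, b2, q3, b3, q4⟩ := b
  dsimp at h1 h2 h3
  subst h1 h3
  have : a2 = b2 := by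
    funext i hi
    exact h2 i hi hi
  subst this
  rfl

/-- The label of position `i` for a morphism: a marker `(some k, α₃ k)` if `i = α₁ k`,
and `(none, α₂ i)` otherwise. -/
noncomputable def lab (α : VMor r d m e n) (i : Fin n) : Option (Fin m) × (Fin r → ℕ) :=
  if h : ∃ k, α.α₁ k = i then (some h.choose, α.α₃ h.choose)
  else (none, α.α₂ i (fun hm => h hm))

theorem lab_marker (α : VMor r d m e n) (k : Fin m) :
    lab α (α.α₁ k) = (some k, α.α₃ k) := by
  have h : ∃ k', α.α₁ k' = α.α₁ k := ⟨k, rfl⟩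
  have hk : h.choose = k := α.mono.injective h.choose_spec
  rw [lab, dif_pos h, hk]

theorem lab_nonmarker (α : VMor r d m e n) (i : Fin n) (hi : i ∉ Set.range α.α₁) :
    lab α i = (none, α.α₂ i hi) := by
  have h : ¬ ∃ k, α.α₁ k = i := fun hc => hi hc
  rw [lab, dif_neg h]

theorem eq_marker_of_lab_fst (α : VMor r d m e n) (i : Fin n) (k : Fin m)
    (h : (lab α i).1 = some k) : α.α₁ k = i := by
  by_cases hi : ∃ k', α.α₁ k' = i
  · obtain ⟨k', hk'⟩ := hi
    rw [← hk', lab_marker] at h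
    cases h
    exact hk'
  · rw [lab_nonmarker α i (fun hc => hi hc)] at h
    cases h

/-- The key divisibility lemma: if labels of `α` embed into labels of `α'` via a strictly
monotone map with domination, and `e ≤ f`, then `α` divides `α'`. -/
theorem exists_comp_eq {e n f p : ℕ} (α : VMor r d m e n) (α' : VMor r d m f p)
    (hef : e ≤ f) (g : Fin n → Fin p) (hg : StrictMono g)
    (hR : ∀ i, VRel m r (lab α i) (lab α' (g i))) :
    ∃ β : VMor r e n f p, α' = β.comp α := by
  -- markers map to markers
  have hmark : ∀ k : Fin m, g (α.α₁ k) = α'.α₁ k := by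
    intro k
    have h1 := (hR (α.α₁ k)).1
    rw [lab_marker] at h1
    exact (eq_marker_of_lab_fst α' _ k h1.symm).symm
  have hrange : ∀ j : Fin p, j ∉ Set.range g → j ∉ Set.range α'.α₁ := by
    rintro j hj ⟨k, hk⟩
    exact hj ⟨α.α₁ k, by rw [hmark k, hk]⟩
  -- nonmarkers map to nonmarkers
  have hnon : ∀ i : Fin n, i ∉ Set.range α.α₁ → g i ∉ Set.range α'.α₁ := by
    intro i hi hc
    obtain ⟨k, hk⟩ := hc
    have h1 := (hR i).1
    rw [lab_nonmarker α i hi, ← hk, lab_marker] at h1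
    cases h1
  -- domination facts
  have hdom3 : ∀ k : Fin m, α.α₃ k ≤ α'.α₃ k := by
    intro k
    have h2 := (hR (α.α₁ k)).2
    rwa [lab_marker, hmark, lab_marker] at h2
  have hdom2 : ∀ i (hi : i ∉ Set.range α.α₁),
      α.α₂ i hi ≤ α'.α₂ (g i) (hnon i hi) := by
    intro i hi
    have h2 := (hR i).2
    rwa [lab_nonmarker α i hi, lab_nonmarker α' (g i) (hnon i hi)] at h2
  -- β₃
  set B3 : Fin n → Fin r → ℕ := fun i t => (lab α' (g i)).2 t - (lab α i).2 t with hB3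
  refine ⟨⟨hef, g, hg, fun j hj => α'.α₂ j (hrange j hj),
      fun j hj => α'.hα₂ j (hrange j hj), B3, ?_⟩, ?_⟩
  · -- sums of β₃
    intro i
    by_cases hi : ∃ k, α.α₁ k = i
    · obtain ⟨k, rfl⟩ := hi
      have hd := hdom3 k
      have : ∀ t, B3 (α.α₁ k) t = α'.α₃ k t - α.α₃ k t := by
        intro t; rw [hB3]; dsimp only; rw [lab_marker, hmark, lab_marker]
      calc ∑ t, B3 (α.α₁ k) t = ∑ t, (α'.α₃ k t - α.α₃ k t) := by
              exact Finset.sum_congr rfl fun t _ => this t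
        _ = (∑ t, α'.α₃ k t) - ∑ t, α.α₃ k t :=
              Finset.sum_tsub_distrib _ (fun t _ => hd t)
        _ = f - e := by
              rw [α'.hα₃, α.hα₃]
              have := α.hde; have := α'.hde; omega
    · have hi' : i ∉ Set.range α.α₁ := fun hc => hi hc
      have hd := hdom2 i hi'
      have : ∀ t, B3 i t = α'.α₂ (g i) (hnon i hi') t - α.α₂ i hi' t := by
        intro t; rw [hB3]; dsimp only
        rw [lab_nonmarker α i hi', lab_nonmarker α' (g i) (hnon i hi')]
      calc ∑ t, B3 i t = ∑ t, (α'.α₂ (g i) (hnon i hi') t - α.α₂ i hi' t) :=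
              Finset.sum_congr rfl fun t _ => this t
        _ = (∑ t, α'.α₂ (g i) (hnon i hi') t) - ∑ t, α.α₂ i hi' t :=
              Finset.sum_tsub_distrib _ (fun t _ => hd t)
        _ = f - e := by rw [α'.hα₂, α.hα₂]
  · -- α' = β.comp α
    refine ext' ?_ ?_ ?_
    · funext k
      exact (hmark k).symm
    · intro j hj' hjc
      show α'.α₂ j hj' = _
      simp only [comp]
      split
      · rename_i h
        have hgi : g h.choose = j := h.choose_spec
        have hi' : h.choose ∉ Set.range α.α₁ := by
          rintro ⟨k, hk⟩
          exact hj' ⟨k, by rw [← hmark k, hk, hgi]⟩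
        funext t
        have hB : B3 h.choose t =
            α'.α₂ (g h.choose) (hnon h.choose hi') t - α.α₂ h.choose hi' t := by
          rw [hB3]; dsimp only
          rw [lab_nonmarker α h.choose hi', lab_nonmarker α' (g h.choose) (hnon h.choose hi')]
        have key : ∀ (j') (hj'' : j' ∉ Set.range α'.α₁), g h.choose = j' →
            α'.α₂ (g h.choose) (hnon h.choose hi') t = α'.α₂ j' hj'' t := by
          rintro j' hj'' rfl; rfl
        show α'.α₂ j hj' t = α.α₂ h.choose _ t + B3 h.choose t
        rw [hB, ← key j hj' hgi]
        have hd : α.α₂ h.choose hi' t ≤ α'.α₂ (g h.choose) (hnon h.choose hi') t :=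
          hdom2 h.choose hi' t
        omega
      · rfl
    · funext k t
      show α'.α₃ k t = α.α₃ k t + B3 (α.α₁ k) t
      have : B3 (α.α₁ k) t = α'.α₃ k t - α.α₃ k t := by
        rw [hB3]; dsimp only; rw [lab_marker, hmark, lab_marker]
      rw [this]
      have hle : α.α₃ k t ≤ α'.α₃ k t := hdom3 k t
      omega

end VMor

/-- For each object `(d,m)` of `𝒱_r`, the set of all morphisms with
source `(d,m)`, preordered by divisibility (`α ≤ α'` iff `α' = β ∘ α` for some `β`), is
noetherian (well-quasi-ordered): every infinite sequence of morphisms with source `(d,m)`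
admits indices `i < j` with `α_i ≤ α_j`. -/
theorem veronese_divisibility_wqo (r d m : ℕ)
    (F : ℕ → Σ' (e : ℕ) (n : ℕ), VMor r d m e n) :
    ∃ i j, i < j ∧
      ∃ β : VMor r (F i).1 (F i).2.1 (F j).1 (F j).2.1,
        (F j).2.2 = β.comp (F i).2.2 := by
  classical
  -- extract a subsequence along which the degrees `e` are monotone
  have hN : (Set.univ : Set ℕ).IsPWO :=
    (Set.isWF_univ_iff.2 (inferInstance : WellFoundedLT ℕ)).isPWO
  obtain ⟨g0, hg0⟩ := hN.exists_monotone_subseq (f := fun i => (F i).1) (fun _ => Set.mem_univ _)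
  -- Higman's lemma for the label lists
  haveI : IsPreorder (Option (Fin m) × (Fin r → ℕ)) (VRel m r) := {}
  have hH := Set.PartiallyWellOrderedOn.partiallyWellOrderedOn_sublistForall₂
    (VRel m r) (VRel_pwo m r)
  obtain ⟨a, b, hab, hsub⟩ := Set.partiallyWellOrderedOn_iff_exists_lt.1 hH
    (fun i => (List.finRange (F (g0 i)).2.1).map (VMor.lab (F (g0 i)).2.2))
    (fun i => by intro x _; exact Set.mem_univ _)
  obtain ⟨g, hg, hR⟩ := exists_embedding_of_sublistForall₂ _ _ hsub
  obtain ⟨β, hβ⟩ := VMor.exists_comp_eq (F (g0 a)).2.2 (F (g0 b)).2.2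
    (hg0 (le_of_lt hab)) g hg hR
  exact ⟨g0 a, g0 b, g0.strictMono hab, β, hβ⟩
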